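/- Let G = (V, E) be a simple graph with vertices v₁, …, v_n. For each i ∈ {1, …, n}, define the n-qubit Pauli string o_i by: the j-th entry of o_i is Z if j = i; X if j > i and {v_i, v_j} ∉ E; and I otherwise. Then for all i < j, the matrices o_i and o_j commute if and only if {v_i, v_j} ∈ E; moreover, when they commute they qubit-wise commute. -/

import Mathlib

open Matrix Finset

inductive Pauli : Type
  | I | X | Y | Z
  deriving DecidableEq

instance instFintypePauli : Fintype Pauli :=
  ⟨{Pauli.I, Pauli.X, Pauli.Y, Pauli.Z}, fun x => by cases x <;> decide⟩

noncomputable def Pauli.mat : Pauli → Matrix (Fin 2) (Fin 2) ℂ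
  | .I => 1
  | .X => !![0, 1; 1, 0]
  | .Y => !![0, -Complex.I; Complex.I, 0]
  | .Z => !![1, 0; 0, -1]

/-- An `N`-qubit Pauli string: a function from qubit indices to single-qubit Paulis. -/
abbrev PauliString (N : ℕ) := Fin N → Pauli

/-- The `2^N × 2^N` matrix of a Pauli string, as the tensor (Kronecker) product of its
entries, with rows/columns indexed by `Fin N → Fin 2`. -/
noncomputable def Pmat {N : ℕ} (A : PauliString N) :
    Matrix (Fin N → Fin 2) (Fin N → Fin 2) ℂ :=
  Matrix.of fun x y => ∏ j, (A j).mat (x j) (y j)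

/-- The Pauli string `o_i` associated with vertex `v_i` of a graph `G` in the reduction
from MIN-CLIQUE-COVER: `Z` at index `i`, `X` at each index `j > i` with `{v_i, v_j} ∉ E`,
and `I` elsewhere. -/
def oStr {n : ℕ} (G : SimpleGraph (Fin n)) [DecidableRel G.Adj] (i : Fin n) :
    PauliString n := fun j =>
  if j = i then Pauli.Z
  else if i < j ∧ ¬ G.Adj i j then Pauli.X
  else Pauli.I

/-!
Single-qubit Paulis either commute or anticommute, so two Pauli strings commute up to the
sign `(-1)^m`, where `m` counts the sites at which their entries anticommute; as Pauli strings
are involutions, they commute iff `m` is even. For `o_i` and `o_j` with `i < j` the only site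
where the entries can anticommute is `j`: there `o_j` has `Z`, and `o_i` has `X` exactly when
`v_i v_j` is not an edge. Hence `m` is `0` or `1` according to adjacency, and `m = 0` means
that every site commutes.
-/

def Pauli.Anticommute (P Q : Pauli) : Prop :=
  P ≠ .I ∧ Q ≠ .I ∧ P ≠ Q

instance : DecidableRel Pauli.Anticommute := fun P Q =>
  inferInstanceAs (Decidable (P ≠ .I ∧ Q ≠ .I ∧ P ≠ Q))

theorem Pauli.mat_mul_self (P : Pauli) : P.mat * P.mat = 1 := by
  cases P <;> ext a b <;> fin_cases a <;> fin_cases b <;> simp [Pauli.mat]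

theorem Pauli.mat_mul_eq_ite_smul (P Q : Pauli) :
    P.mat * Q.mat = (if P.Anticommute Q then -1 else 1 : ℂ) • (Q.mat * P.mat) := by
  cases P <;> cases Q <;> ext a b <;> fin_cases a <;> fin_cases b <;>
    simp [Pauli.mat, Pauli.Anticommute]

theorem Pmat_mul {N : ℕ} (A B : PauliString N) :
    Pmat A * Pmat B = Matrix.of fun x y => ∏ k, ((A k).mat * (B k).mat) (x k) (y k) := by
  ext x y
  simp only [Pmat, Matrix.mul_apply, Matrix.of_apply, ← Finset.prod_mul_distrib]
  exact (Fintype.prod_sum fun k (a : Fin 2) => (A k).mat (x k) a * (B k).mat a (y k)).symm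

theorem Pmat_mul_self {N : ℕ} (A : PauliString N) : Pmat A * Pmat A = 1 := by
  ext x y
  simp only [Pmat_mul, Pauli.mat_mul_self, Matrix.of_apply, Matrix.one_apply,
    Finset.prod_ite_zero, Finset.prod_const_one, Finset.mem_univ, true_implies, funext_iff]

theorem Pmat_mul_eq_neg_one_pow_smul {N : ℕ} (A B : PauliString N) :
    Pmat A * Pmat B =
      (-1 : ℂ) ^ #{k | (A k).Anticommute (B k)} • (Pmat B * Pmat A) := by
  ext x y
  simp only [Pmat_mul, Pauli.mat_mul_eq_ite_smul (A _), Matrix.of_apply, Matrix.smul_apply,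
    smul_eq_mul, Finset.prod_mul_distrib, Finset.prod_ite, Finset.prod_const,
    one_pow, mul_one]

theorem Pmat_mul_comm_iff_even {N : ℕ} (A B : PauliString N) :
    Pmat A * Pmat B = Pmat B * Pmat A ↔ Even #{k | (A k).Anticommute (B k)} := by
  have hBA : Pmat B * Pmat A ≠ 0 := fun h => by
    simpa [mul_assoc, Pmat_mul_self] using congrArg (· * Pmat A * Pmat B) h
  rw [Pmat_mul_eq_neg_one_pow_smul,
    ← neg_one_pow_eq_one_iff_even (by norm_num : (-1 : ℂ) ≠ 1)]
  exact ⟨fun h => smul_left_injective ℂ hBA (h.trans (one_smul ℂ _).symm),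
    fun h => by rw [h, one_smul]⟩

theorem oStr_anticommute_iff {n : ℕ} (G : SimpleGraph (Fin n)) [DecidableRel G.Adj]
    {i j : Fin n} (hij : i < j) (k : Fin n) :
    (oStr G i k).Anticommute (oStr G j k) ↔ k = j ∧ ¬ G.Adj i j := by
  unfold oStr Pauli.Anticommute
  split_ifs <;> grind

/-- In the reduction from MIN-CLIQUE-COVER: for `i < j`, the matrices of `o_i` and `o_j`
commute iff `{v_i, v_j}` is an edge of `G`; moreover when they commute they qubit-wise
commute. -/
theorem oStr_commute_iff_adj {n : ℕ} (G : SimpleGraph (Fin n)) [DecidableRel G.Adj]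
    (i j : Fin n) (hij : i < j) :
    (Pmat (oStr G i) * Pmat (oStr G j) = Pmat (oStr G j) * Pmat (oStr G i) ↔ G.Adj i j) ∧
    (Pmat (oStr G i) * Pmat (oStr G j) = Pmat (oStr G j) * Pmat (oStr G i) →
      ∀ k, (oStr G i k).mat * (oStr G j k).mat = (oStr G j k).mat * (oStr G i k).mat) := by
  have hsites : ({k | (oStr G i k).Anticommute (oStr G j k)} : Finset (Fin n)) =
      if G.Adj i j then ∅ else {j} := by
    ext k
    simp only [Finset.mem_filter, Finset.mem_univ, true_and, oStr_anticommute_iff G hij]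
    split_ifs <;> simp [*]
  have hcomm : Pmat (oStr G i) * Pmat (oStr G j) = Pmat (oStr G j) * Pmat (oStr G i) ↔
      G.Adj i j := by
    rw [Pmat_mul_comm_iff_even, hsites]
    split_ifs <;> simp [*]
  refine ⟨hcomm, fun h k => ?_⟩
  have hk : ¬ (oStr G i k).Anticommute (oStr G j k) := by
    simp [oStr_anticommute_iff G hij, hcomm.1 h]
  rw [Pauli.mat_mul_eq_ite_smul, if_neg hk, one_smul]
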